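/- arXiv:2403.07328 — 2 statements merged into one kernel-verified Lean document; each statement's English description precedes it below -/
import Mathlib

section
/- Let O be a nonempty finite family of finite sets with |O| = k. Then there exists a 'light' set S ∈ O such that k·|⋃(O \ {S})| ≥ (k−1)·|⋃O|; that is, removing S from O decreases the coverage by at most a 1/k fraction. -/
/-- In any nonempty family `O` of `k` finite sets there is a 'light' set `S ∈ O` whose removal
decreases the coverage by at most a `1/k` fraction: `k * |⋃(O \ {S})| ≥ (k-1) * |⋃O|`. -/
theorem exists_light_set
    {U : Type*} [Fintype U] [DecidableEq U]
    (O : Finset (Finset U)) (hne : O.Nonempty) (k : ℕ) (hk : O.card = k) :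
    ∃ S ∈ O, (k - 1) * (O.biUnion id).card ≤ k * ((O.erase S).biUnion id).card := by
  classical
  set t := O.biUnion id with ht
  -- each erased union, intersected with t, is itself
  have hsub : ∀ S, (O.erase S).biUnion id ⊆ t := fun S =>
    Finset.biUnion_subset_biUnion_of_subset_left id (Finset.erase_subset S O)
  have key : (k - 1) * t.card ≤ ∑ S ∈ O, ((O.erase S).biUnion id).card := by
    have h1 : ∑ S ∈ O, ((O.erase S).biUnion id).card
        = ∑ S ∈ O, ∑ x ∈ t, (if x ∈ (O.erase S).biUnion id then 1 else 0) := by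
      refine Finset.sum_congr rfl fun S _ => ?_
      rw [← Finset.card_filter]
      congr 1
      rw [Finset.filter_mem_eq_inter, Finset.inter_eq_right.2 (hsub S)]
    rw [h1, Finset.sum_comm]
    have h2 : ∀ x ∈ t, (k - 1) ≤ ∑ S ∈ O, (if x ∈ (O.erase S).biUnion id then 1 else 0) := by
      intro x hx
      rw [← Finset.card_filter]
      have hbad : (O.filter (fun S => ¬ x ∈ (O.erase S).biUnion id)).card ≤ 1 := by
        rw [Finset.card_le_one]
        intro S1 hS1 S2 hS2
        simp only [Finset.mem_filter] at hS1 hS2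
        obtain ⟨A, hA, hxA⟩ := Finset.mem_biUnion.1 hx
        have e1 : S1 = A := by
          by_contra hne'
          exact hS1.2 (Finset.mem_biUnion.2 ⟨A, Finset.mem_erase.2 ⟨fun h => hne' h.symm, hA⟩, hxA⟩)
        have e2 : S2 = A := by
          by_contra hne'
          exact hS2.2 (Finset.mem_biUnion.2 ⟨A, Finset.mem_erase.2 ⟨fun h => hne' h.symm, hA⟩, hxA⟩)
        rw [e1, e2]
      have := Finset.card_filter_add_card_filter_not
        (s := O) (p := fun S => x ∈ (O.erase S).biUnion id)
      omega
    calc (k - 1) * t.card = ∑ _x ∈ t, (k - 1) := by rw [Finset.sum_const, smul_eq_mul, mul_comm]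
      _ ≤ _ := Finset.sum_le_sum h2
  have hsum : ∑ S ∈ O, (k - 1) * t.card ≤ ∑ S ∈ O, k * ((O.erase S).biUnion id).card := by
    rw [Finset.sum_const, hk, smul_eq_mul, ← Finset.mul_sum]
    exact Nat.mul_le_mul_left k key
  exact Finset.exists_le_of_sum_le hne hsum
end

section
/- Let F be a finite family of finite sets, let L ∈ F, let ε > 0 be a real number, let k ≥ 1 be an integer, and let O ⊆ F with |O| = k, L ∉ O, and such that every S ∈ O satisfies |S ∩ L| < ε·|L|/k (no set of O is heavy with respect to L). Then there exists a subfamily O' ⊆ F \ {L} with |O'| = k−1 and |(⋃O') \ L| ≥ ((k−1)/k)·|⋃O| − ε·|L|. (This is the 'hard case' lower bound OPT_{k−1}(F − L) ≥ ((k−1)/k)·OPT_k(F) − ε·|L|.) -/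
/-- Hard-case lower bound: if `O ⊆ F` has size `k`, avoids `L`, and no set of `O` is heavy
w.r.t. `L`, then there is a subfamily `O' ⊆ F \ {L}` of size `k-1` with
`|(⋃O') \ L| ≥ ((k-1)/k)|⋃O| - ε|L|`. -/
theorem hard_case_lower_bound
    {U : Type*} [Fintype U] [DecidableEq U]
    (F : Finset (Finset U)) (L : Finset U) (hLF : L ∈ F)
    (ε : ℝ) (hε : 0 < ε) (k : ℕ) (hk : 1 ≤ k)
    (O : Finset (Finset U)) (hOF : O ⊆ F) (hOcard : O.card = k) (hLO : L ∉ O)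
    (hlight : ∀ S ∈ O, ((S ∩ L).card : ℝ) < ε * L.card / k) :
    ∃ O' ⊆ F.erase L, O'.card = k - 1 ∧
      ((k - 1 : ℝ) / k) * (O.biUnion id).card - ε * L.card
        ≤ (((O'.biUnion id) \ L).card : ℝ) := by
  classical
  set T := O.biUnion id with hT
  set priv : Finset U → Finset U := fun S => T \ (O.erase S).biUnion id with hpriv
  -- the private parts are pairwise disjoint
  have hdisj : (O : Set (Finset U)).PairwiseDisjoint priv := by
    intro S hS S' hS' hne
    refine Finset.disjoint_left.2 ?_
    intro x hx hx'
    simp only [hpriv, Finset.mem_sdiff, Finset.mem_biUnion] at hx hx'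
    obtain ⟨hxT, hx2⟩ := hx
    obtain ⟨hxT', hx2'⟩ := hx'
    rw [hT] at hxT
    obtain ⟨A, hA, hxA⟩ := Finset.mem_biUnion.1 hxT
    have hAS : A = S := by
      by_contra h
      exact hx2 ⟨A, Finset.mem_erase.2 ⟨h, hA⟩, hxA⟩
    have hAS' : A = S' := by
      by_contra h
      exact hx2' ⟨A, Finset.mem_erase.2 ⟨h, hA⟩, hxA⟩
    exact hne (hAS ▸ hAS')
  have hsum : ∑ S ∈ O, (priv S).card ≤ T.card := by
    rw [← Finset.card_biUnion (fun S hS S' hS' hne => hdisj hS hS' hne)]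
    apply Finset.card_le_card
    intro x hx
    obtain ⟨A, _, hxA⟩ := Finset.mem_biUnion.1 hx
    exact (Finset.mem_sdiff.1 hxA).1
  -- find a set whose private part is small
  have hOne : O.Nonempty := Finset.card_pos.1 (by omega)
  obtain ⟨S, hSO, hSmin⟩ : ∃ S ∈ O, k * (priv S).card ≤ T.card := by
    by_contra h
    push_neg at h
    have : ∑ S ∈ O, T.card < ∑ S ∈ O, k * (priv S).card := by
      apply Finset.sum_lt_sum_of_nonempty hOne
      intro S hS; exact h S hS
    rw [Finset.sum_const, hOcard, ← Finset.mul_sum, smul_eq_mul] at this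
    have := Nat.lt_of_mul_lt_mul_left this
    omega
  refine ⟨O.erase S, ?_, ?_, ?_⟩
  · intro A hA
    have hA' := Finset.mem_erase.1 hA
    refine Finset.mem_erase.2 ⟨?_, hOF hA'.2⟩
    intro h; exact hLO (h ▸ hA'.2)
  · rw [Finset.card_erase_of_mem hSO, hOcard]
  · set O' := O.erase S with hO'
    set u : Finset U := O'.biUnion id with hu
    have hu_sub : u ⊆ T := by
      apply Finset.biUnion_subset_biUnion_of_subset_left
      exact Finset.erase_subset _ _
    have hcard_u : T.card - (priv S).card = u.card := by
      have : priv S = T \ u := rfl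
      have h1 : (T \ u).card = T.card - u.card := Finset.card_sdiff_of_subset hu_sub
      rw [this, h1]
      have := Finset.card_le_card hu_sub
      omega
    -- bound the intersection with L
    have hinter : ((u ∩ L).card : ℝ) ≤ (k - 1 : ℝ) * (ε * L.card / k) := by
      have hsub : u ∩ L ⊆ O'.biUnion (fun A => A ∩ L) := by
        intro x hx
        obtain ⟨hxu, hxL⟩ := Finset.mem_inter.1 hx
        obtain ⟨A, hA, hxA⟩ := Finset.mem_biUnion.1 hxu
        exact Finset.mem_biUnion.2 ⟨A, hA, Finset.mem_inter.2 ⟨hxA, hxL⟩⟩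
      have h1 : (u ∩ L).card ≤ ∑ A ∈ O', (A ∩ L).card :=
        (Finset.card_le_card hsub).trans (Finset.card_biUnion_le)
      have h2 : (∑ A ∈ O', ((A ∩ L).card : ℝ)) ≤ (k - 1 : ℝ) * (ε * L.card / k) := by
        have hcard' : (O'.card : ℝ) = (k : ℝ) - 1 := by
          rw [hO', Finset.card_erase_of_mem hSO, hOcard]
          have : (1:ℕ) ≤ k := hk
          push_cast [Nat.cast_sub this]
          ring
        calc (∑ A ∈ O', ((A ∩ L).card : ℝ))
            ≤ ∑ A ∈ O', (ε * L.card / k) := by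
              apply Finset.sum_le_sum
              intro A hA
              exact le_of_lt (hlight A (Finset.mem_of_mem_erase hA))
          _ = (k - 1 : ℝ) * (ε * L.card / k) := by
              rw [Finset.sum_const, nsmul_eq_mul, hcard']
      calc ((u ∩ L).card : ℝ) ≤ ∑ A ∈ O', ((A ∩ L).card : ℝ) := by
            exact_mod_cast h1
        _ ≤ _ := h2
    have hkpos : (0:ℝ) < k := by exact_mod_cast hk
    have hLnn : (0:ℝ) ≤ (L.card : ℝ) := Nat.cast_nonneg _
    have hsd : (u.card : ℝ) ≤ ((u \ L).card : ℝ) + ((u ∩ L).card : ℝ) := by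
      have := Finset.card_sdiff_add_card_inter u L
      exact_mod_cast this.ge
    have hucard : (T.card : ℝ) - ((priv S).card : ℝ) ≤ (u.card : ℝ) := by
      have := hcard_u
      have h1 : (priv S).card ≤ T.card := Finset.card_le_card (Finset.sdiff_subset)
      push_cast [← this, Nat.cast_sub h1]
      ring_nf
      exact le_refl _
    have hp : ((priv S).card : ℝ) ≤ (T.card : ℝ) / k := by
      rw [le_div_iff₀ hkpos]
      calc ((priv S).card : ℝ) * k = (k * (priv S).card : ℕ) := by push_cast; ring
        _ ≤ (T.card : ℝ) := by exact_mod_cast hSmin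
    have hinter2 : ((u ∩ L).card : ℝ) ≤ ε * L.card := by
      calc ((u ∩ L).card : ℝ) ≤ (k - 1 : ℝ) * (ε * L.card / k) := hinter
        _ ≤ k * (ε * L.card / k) := by
            apply mul_le_mul_of_nonneg_right (by linarith)
            positivity
        _ = ε * L.card := by field_simp
    have key : ((k - 1 : ℝ) / k) * (T.card : ℝ) = (T.card : ℝ) - (T.card : ℝ) / k := by
      field_simp
    rw [key]
    have : (T.card : ℝ) - (T.card : ℝ) / k ≤ (u.card : ℝ) := by linarith
    linarith
end
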